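/- arXiv:2007.03818 — 5 statements merged into one kernel-verified Lean document; each statement's English description precedes it below -/
import Mathlib

section
/- Let R be an associative ring and p a prime number that is not a zero divisor in R. Suppose a, a', b, b' ∈ R all have central images in R/pR, with ā = ā' and b̄ = b̄' in R/pR. If c, c' ∈ R satisfy p·c = ab − ba and p·c' = a'b' − b'a', then c̄ = c̄' in R/pR. Equivalently, [a,b] − [a',b'] ∈ p²R. -/
/-- The reduction modulo `p` Poisson bracket is independent of the choice of
lifts: if `a ≡ a'`, `b ≡ b'` mod `p` all have central images in `R/pR`, `p·c = [a,b]` and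
`p·c' = [a',b']`, then `c ≡ c'` mod `p`. -/
theorem bracket_well_defined {R : Type*} [Ring R] (p : ℕ) (hp : p.Prime)
    (hpnzd : ∀ r : R, (p : R) * r = 0 → r = 0)
    (a a' b b' c c' : R)
    (ha : ∀ r : R, ∃ d : R, a * r - r * a = (p : R) * d)
    (ha' : ∀ r : R, ∃ d : R, a' * r - r * a' = (p : R) * d)
    (hb : ∀ r : R, ∃ d : R, b * r - r * b = (p : R) * d)
    (hb' : ∀ r : R, ∃ d : R, b' * r - r * b' = (p : R) * d)
    (haa' : ∃ d : R, a - a' = (p : R) * d)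
    (hbb' : ∃ d : R, b - b' = (p : R) * d)
    (hc : (p : R) * c = a * b - b * a)
    (hc' : (p : R) * c' = a' * b' - b' * a') :
    ∃ e : R, c - c' = (p : R) * e := by
  obtain ⟨u, hu⟩ := haa'
  obtain ⟨v, hv⟩ := hbb'
  obtain ⟨d1, hd1⟩ := ha' v
  obtain ⟨d2, hd2⟩ := hb' u
  have ha2 : a = a' + (p : R) * u := by rw [← hu]; noncomm_ring
  have hb2 : b = b' + (p : R) * v := by rw [← hv]; noncomm_ring
  refine ⟨d1 - d2 + (u * v - v * u), ?_⟩
  have h2 : u * b' - b' * u = -((p : R) * d2) := by rw [← hd2]; noncomm_ring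
  have key : (p : R) * (c - c') =
      (p : R) * ((p : R) * (d1 - d2 + (u * v - v * u))) := by
    calc (p : R) * (c - c') = (a * b - b * a) - (a' * b' - b' * a') := by
          rw [mul_sub, hc, hc']
      _ = (p : R) * (a' * v - v * a') + (p : R) * (u * b' - b' * u)
            + (p : R) * ((p : R) * (u * v - v * u)) := by
          rw [ha2, hb2]
          simp only [mul_add, add_mul, mul_sub, sub_mul, mul_assoc,
            (Nat.cast_commute p a').left_comm, (Nat.cast_commute p b').left_comm,
            (Nat.cast_commute p u).left_comm, (Nat.cast_commute p v).left_comm]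
          abel
      _ = (p : R) * ((p : R) * (d1 - d2 + (u * v - v * u))) := by
          rw [hd1, h2]; noncomm_ring
  have h0 : (p : R) * (c - c' - (p : R) * (d1 - d2 + (u * v - v * u))) = 0 := by
    rw [mul_sub, key]; noncomm_ring
  have := hpnzd _ h0
  exact sub_eq_zero.mp this
end

section
/- Let R be an associative ring and p a prime number that is not a zero divisor in R. Suppose a, b ∈ R have central images in R/pR, and c ∈ R satisfies p·c = ab − ba. Then the image c̄ of c in R/pR is central in R/pR; that is, for every r ∈ R one has cr − rc ∈ pR. -/
/-- The reduction modulo `p` Poisson bracket takes values in the center of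
`R/pR`: if `a, b` have central images mod `p` and `p·c = [a,b]`, then the image of `c` in
`R/pR` is central. -/
theorem bracket_central {R : Type*} [Ring R] (p : ℕ) (hp : p.Prime)
    (hpnzd : ∀ r : R, (p : R) * r = 0 → r = 0)
    (a b c : R)
    (ha : ∀ r : R, ∃ d : R, a * r - r * a = (p : R) * d)
    (hb : ∀ r : R, ∃ d : R, b * r - r * b = (p : R) * d)
    (hc : (p : R) * c = a * b - b * a) :
    ∀ r : R, ∃ d : R, c * r - r * c = (p : R) * d := by
  intro r
  obtain ⟨da, hda⟩ := ha r
  obtain ⟨db, hdb⟩ := hb r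
  obtain ⟨d1, hd1⟩ := ha db
  obtain ⟨d2, hd2⟩ := hb da
  refine ⟨d1 - d2, ?_⟩
  have ca : a * ((p : R) * db) = (p : R) * (a * db) := by
    rw [← mul_assoc, ← (Nat.cast_commute p a).eq, mul_assoc]
  have cb : b * ((p : R) * da) = (p : R) * (b * da) := by
    rw [← mul_assoc, ← (Nat.cast_commute p b).eq, mul_assoc]
  have key : (p : R) * (c * r) - (p : R) * (r * c) = (p : R) * ((p : R) * (d1 - d2)) := by
    calc (p : R) * (c * r) - (p : R) * (r * c)
        = ((p : R) * c) * r - r * ((p : R) * c) := by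
          rw [← mul_assoc, ← mul_assoc, (Nat.cast_commute p r).eq]; noncomm_ring
      _ = (a * b - b * a) * r - r * (a * b - b * a) := by rw [hc]
      _ = a * (b * r - r * b) + (a * r - r * a) * b
            - b * (a * r - r * a) - (b * r - r * b) * a := by noncomm_ring
      _ = a * ((p : R) * db) + ((p : R) * da) * b
            - b * ((p : R) * da) - ((p : R) * db) * a := by rw [hda, hdb]
      _ = (p : R) * ((a * db - db * a) - (b * da - da * b)) := by
          rw [ca, cb, mul_assoc, mul_assoc]; noncomm_ring
      _ = (p : R) * ((p : R) * (d1 - d2)) := by rw [hd1, hd2]; noncomm_ring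
  have hx : (p : R) * (c * r - r * c - (p : R) * (d1 - d2)) = 0 := by
    rw [mul_sub, mul_sub, key, sub_self]
  exact sub_eq_zero.mp (hpnzd _ hx)
end

section
/- Let R be an associative ring and p a prime number that is not a zero divisor in R. Suppose a, b, d ∈ R have central images in R/pR. Let u, v, w ∈ R satisfy p·u = ab − ba, p·v = bd − db, p·w = da − ad, and let t₁, t₂, t₃ ∈ R satisfy p·t₁ = av − va, p·t₂ = bw − wb, p·t₃ = du − ud. Then t₁ + t₂ + t₃ ∈ pR. In other words, the reduction modulo p Poisson bracket on Z(R/pR) satisfies the Jacobi identity {x,{y,z}} + {y,{z,x}} + {z,{x,y}} = 0. -/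
/-- The reduction modulo `p` Poisson bracket satisfies the Jacobi identity
`{x,{y,z}} + {y,{z,x}} + {z,{x,y}} = 0` on the center of `R/pR`. -/
theorem bracket_jacobi {R : Type*} [Ring R] (p : ℕ) (hp : p.Prime)
    (hpnzd : ∀ r : R, (p : R) * r = 0 → r = 0)
    (a b d u v w t₁ t₂ t₃ : R)
    (ha : ∀ r : R, ∃ e : R, a * r - r * a = (p : R) * e)
    (hb : ∀ r : R, ∃ e : R, b * r - r * b = (p : R) * e)
    (hd : ∀ r : R, ∃ e : R, d * r - r * d = (p : R) * e)
    (hu : (p : R) * u = a * b - b * a)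
    (hv : (p : R) * v = b * d - d * b)
    (hw : (p : R) * w = d * a - a * d)
    (ht₁ : (p : R) * t₁ = a * v - v * a)
    (ht₂ : (p : R) * t₂ = b * w - w * b)
    (ht₃ : (p : R) * t₃ = d * u - u * d) :
    ∃ e : R, t₁ + t₂ + t₃ = (p : R) * e := by
  refine ⟨0, ?_⟩
  rw [mul_zero]
  apply hpnzd
  apply hpnzd
  have hpc : ∀ x y : R, (p : R) * (x * y) = x * ((p : R) * y) := fun x y => by
    rw [← mul_assoc, (Nat.cast_commute p x).eq, mul_assoc]
  have hr : ∀ x y : R, (p : R) * (x * y) = ((p : R) * x) * y := fun x y =>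
    (mul_assoc _ x y).symm
  calc (p : R) * ((p : R) * (t₁ + t₂ + t₃))
      = (p : R) * ((p : R) * t₁) + (p : R) * ((p : R) * t₂)
        + (p : R) * ((p : R) * t₃) := by noncomm_ring
    _ = (p : R) * (a * v - v * a) + (p : R) * (b * w - w * b)
        + (p : R) * (d * u - u * d) := by rw [ht₁, ht₂, ht₃]
    _ = a * ((p : R) * v) - ((p : R) * v) * a + (b * ((p : R) * w) - ((p : R) * w) * b)
        + (d * ((p : R) * u) - ((p : R) * u) * d) := by
          rw [mul_sub, mul_sub, mul_sub, hpc a v, hpc b w, hpc d u, hr v a, hr w b, hr u d]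
    _ = a * (b * d - d * b) - (b * d - d * b) * a + (b * (d * a - a * d) - (d * a - a * d) * b)
        + (d * (a * b - b * a) - (a * b - b * a) * d) := by rw [hv, hw, hu]
    _ = 0 := by noncomm_ring
end

section
/- Let R be an associative ring and p a prime number that is not a zero divisor in R. Then there exists a map β : Z(R/pR) × Z(R/pR) → Z(R/pR) on the center of R/pR such that: (i) for all a, b ∈ R with central images mod p and all c ∈ R with p·c = ab − ba, one has β(ā, b̄) = c̄; (ii) β is additive in each variable; (iii) β is antisymmetric: β(x,y) = −β(y,x); (iv) β satisfies the Leibniz rule β(x, yz) = β(x,y)z + yβ(x,z); and (v) β satisfies the Jacobi identity β(x, β(y,z)) + β(y, β(z,x)) + β(z, β(x,y)) = 0. Moreover such a map β is unique. -/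
/-- The relation on `R` identifying elements congruent modulo `p`; the quotient ring
`RingQuot (pRel R p)` is `R/pR`. -/
def pRel (R : Type*) [Ring R] (p : ℕ) : R → R → Prop :=
  fun x y => ∃ c : R, x - y = (p : R) * c

namespace PoissonAux

variable {R : Type*} [Ring R] (p : ℕ)

lemma hswap (x y : R) : x * ((p : R) * y) = (p : R) * (x * y) := by
  rw [← mul_assoc, ← (Nat.cast_commute p x).eq, mul_assoc]

/-- `pR` as a two-sided ideal. -/
def pIdeal (R : Type*) [Ring R] (p : ℕ) : TwoSidedIdeal R :=
  TwoSidedIdeal.mk' {x : R | ∃ c : R, x = (p : R) * c}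
    ⟨0, by simp⟩
    (fun hx hy => by
      obtain ⟨c, hc⟩ := hx; obtain ⟨d, hd⟩ := hy
      exact ⟨c + d, by rw [hc, hd, mul_add]⟩)
    (fun hx => by obtain ⟨c, hc⟩ := hx; exact ⟨-c, by rw [hc, mul_neg]⟩)
    (fun hy => by
      obtain ⟨c, hc⟩ := hy; rename_i x y
      exact ⟨x * c, by rw [hc, hswap]⟩)
    (fun hx => by
      obtain ⟨c, hc⟩ := hx; rename_i x y
      exact ⟨c * y, by rw [hc, mul_assoc]⟩)

local notation "mk" => RingQuot.mkRingHom (pRel R p)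

lemma mk_eq_iff (a b : R) : mk a = mk b ↔ pRel R p a b := by
  constructor
  · intro h
    set c := (pIdeal R p).ringCon
    have hf : ∀ ⦃x y : R⦄, pRel R p x y → RingCon.mk' c x = RingCon.mk' c y := by
      intro x y hxy
      have : c x y := by
        rw [TwoSidedIdeal.rel_iff, pIdeal, TwoSidedIdeal.mem_mk']
        exact hxy
      exact c.eq.mpr this
    have h2 := congrArg (RingQuot.lift ⟨RingCon.mk' c, hf⟩) h
    rw [RingQuot.lift_mkRingHom_apply, RingQuot.lift_mkRingHom_apply] at h2
    have : c a b := c.eq.mp h2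
    rw [TwoSidedIdeal.rel_iff, pIdeal, TwoSidedIdeal.mem_mk'] at this
    exact this
  · exact RingQuot.mkRingHom_rel

lemma mk_eq_iff' (a b : R) : mk a = mk b ↔ ∃ c : R, a - b = (p : R) * c := mk_eq_iff p a b

variable (R) in
lemma mk_surj : Function.Surjective (RingQuot.mkRingHom (pRel R p)) :=
  RingQuot.mkRingHom_surjective _

/-- centrality of the class of `a` in elementwise terms -/
lemma central_iff (a : R) :
    mk a ∈ Subring.center (RingQuot (pRel R p)) ↔
      ∀ r : R, ∃ u : R, a * r - r * a = (p : R) * u := by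
  rw [Subring.mem_center_iff]
  constructor
  · intro h r
    have := h (mk r)
    rw [← map_mul, ← map_mul, mk_eq_iff'] at this
    obtain ⟨u, hu⟩ := this
    exact ⟨-u, by rw [← neg_sub (r * a), hu, mul_neg]⟩
  · intro h g
    obtain ⟨r, rfl⟩ := mk_surj R p g
    obtain ⟨u, hu⟩ := h r
    rw [← map_mul, ← map_mul]
    rw [mk_eq_iff']
    exact ⟨-u, by rw [← neg_sub (a * r), hu, mul_neg]⟩


section
lemma cancel (hpnzd : ∀ r : R, (p : R) * r = 0 → r = 0)
    {x y : R} (h : (p : R) * x = (p : R) * y) : x = y := by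
  have := hpnzd (x - y) (by rw [mul_sub, h, sub_self])
  exact sub_eq_zero.mp this

/-- If `p·c = [a,b]` with `a`, `b` central mod `p`, then `c` is central mod `p`. -/
lemma central_c (hpnzd : ∀ r : R, (p : R) * r = 0 → r = 0) {a b c : R}
    (ha : ∀ r : R, ∃ u : R, a * r - r * a = (p : R) * u)
    (hb : ∀ r : R, ∃ u : R, b * r - r * b = (p : R) * u)
    (hc : (p : R) * c = a * b - b * a) (r : R) :
    ∃ w : R, c * r - r * c = (p : R) * w := by
  obtain ⟨u, hu⟩ := ha r
  obtain ⟨v, hv⟩ := hb r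
  obtain ⟨w1, hw1⟩ := ha v
  obtain ⟨w2, hw2⟩ := hb u
  refine ⟨w1 - w2, cancel p hpnzd ?_⟩
  calc (p : R) * (c * r - r * c)
      = ((p : R) * c) * r - r * ((p : R) * c) := by rw [mul_sub, mul_assoc, hswap p r c]
    _ = (a * b - b * a) * r - r * (a * b - b * a) := by rw [hc]
    _ = a * (b * r - r * b) - (b * r - r * b) * a
          - (b * (a * r - r * a) - (a * r - r * a) * b) := by noncomm_ring
    _ = a * ((p : R) * v) - ((p : R) * v) * a
          - (b * ((p : R) * u) - ((p : R) * u) * b) := by rw [hu, hv]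
    _ = (p : R) * (a * v) - (p : R) * (v * a)
          - ((p : R) * (b * u) - (p : R) * (u * b)) := by
          rw [hswap p a v, hswap p b u, mul_assoc, mul_assoc]
    _ = (p : R) * ((a * v - v * a) - (b * u - u * b)) := by noncomm_ring
    _ = (p : R) * ((p : R) * w1 - (p : R) * w2) := by rw [hw1, hw2]
    _ = (p : R) * ((p : R) * (w1 - w2)) := by noncomm_ring

/-- Well-definedness: the class of `c` depends only on the classes of `a` and `b`. -/
lemma welldef (hpnzd : ∀ r : R, (p : R) * r = 0 → r = 0) {a a' b b' c c' : R}
    (ha : ∀ r : R, ∃ u : R, a * r - r * a = (p : R) * u)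
    (hb : ∀ r : R, ∃ u : R, b * r - r * b = (p : R) * u)
    (h1 : mk a = mk a') (h2 : mk b = mk b')
    (hc : (p : R) * c = a * b - b * a)
    (hc' : (p : R) * c' = a' * b' - b' * a') : mk c = mk c' := by
  obtain ⟨u, hu⟩ := (mk_eq_iff' p a' a).mp h1.symm
  obtain ⟨v, hv⟩ := (mk_eq_iff' p b' b).mp h2.symm
  have hu' : a' = a + (p : R) * u := by rw [← hu]; abel
  have hv' : b' = b + (p : R) * v := by rw [← hv]; abel
  obtain ⟨w1, hw1⟩ := ha v
  obtain ⟨w2, hw2⟩ := hb u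
  have key : (p : R) * (c' - c)
      = (p : R) * ((p : R) * (w1 - w2 + (u * v - v * u))) := by
    calc (p : R) * (c' - c) = (p : R) * c' - (p : R) * c := by rw [mul_sub]
      _ = ((a + (p : R) * u) * (b + (p : R) * v)
            - (b + (p : R) * v) * (a + (p : R) * u)) - (a * b - b * a) := by
            rw [hc, hc', hu', hv']
      _ = (a * ((p : R) * v) - ((p : R) * v) * a)
            - (b * ((p : R) * u) - ((p : R) * u) * b)
            + (((p : R) * u) * ((p : R) * v) - ((p : R) * v) * ((p : R) * u)) := by
            noncomm_ring
      _ = ((p : R) * (a * v) - (p : R) * (v * a))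
            - ((p : R) * (b * u) - (p : R) * (u * b))
            + ((p : R) * (u * ((p : R) * v)) - (p : R) * (v * ((p : R) * u))) := by
            rw [hswap p a v, hswap p b u, mul_assoc, mul_assoc, mul_assoc, mul_assoc]
      _ = (p : R) * ((a * v - v * a) - (b * u - u * b)
            + (u * ((p : R) * v) - v * ((p : R) * u))) := by noncomm_ring
      _ = (p : R) * ((p : R) * w1 - (p : R) * w2
            + ((p : R) * (u * v) - (p : R) * (v * u))) := by
            rw [hw1, hw2, hswap p u v, hswap p v u]
      _ = (p : R) * ((p : R) * (w1 - w2 + (u * v - v * u))) := by noncomm_ring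
  have hk := cancel p hpnzd key
  rw [mk_eq_iff']
  exact ⟨-(w1 - w2 + (u * v - v * u)), by rw [mul_neg, ← hk]; abel⟩

end


section
noncomputable def lft (x : Subring.center (RingQuot (pRel R p))) : R :=
  (mk_surj R p x.1).choose

lemma lft_spec (x : Subring.center (RingQuot (pRel R p))) : mk (lft p x) = x.1 :=
  (mk_surj R p x.1).choose_spec

lemma lft_central (x : Subring.center (RingQuot (pRel R p))) :
    ∀ r : R, ∃ u : R, lft p x * r - r * lft p x = (p : R) * u :=
  (central_iff p (lft p x)).mp (by rw [lft_spec]; exact x.2)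

lemma exists_c2 {a c : R} (h : mk (a * c) = mk (c * a)) :
    ∃ e : R, (p : R) * e = a * c - c * a := by
  obtain ⟨e, he⟩ := (mk_eq_iff' p _ _).mp h
  exact ⟨e, he.symm⟩

lemma exists_cc (x y : Subring.center (RingQuot (pRel R p))) :
    ∃ c : R, (p : R) * c = lft p x * lft p y - lft p y * lft p x := by
  refine exists_c2 p ?_
  rw [map_mul, map_mul, lft_spec, lft_spec]
  exact Subring.mem_center_iff.mp y.2 x.1

noncomputable def cc (x y : Subring.center (RingQuot (pRel R p))) : R :=
  (exists_cc p x y).choose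

lemma cc_spec (x y : Subring.center (RingQuot (pRel R p))) :
    (p : R) * cc p x y = lft p x * lft p y - lft p y * lft p x :=
  (exists_cc p x y).choose_spec

noncomputable def B (hpnzd : ∀ r : R, (p : R) * r = 0 → r = 0)
    (x y : Subring.center (RingQuot (pRel R p))) :
    Subring.center (RingQuot (pRel R p)) :=
  ⟨mk (cc p x y), (central_iff p _).mpr
    (central_c p hpnzd (lft_central p x) (lft_central p y) (cc_spec p x y))⟩

lemma B_spec (hpnzd : ∀ r : R, (p : R) * r = 0 → r = 0)
    (x y : Subring.center (RingQuot (pRel R p))) {a b c : R}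
    (hxa : mk a = x.1) (hyb : mk b = y.1)
    (hc : (p : R) * c = a * b - b * a) : (B p hpnzd x y).1 = mk c := by
  have ha : ∀ r : R, ∃ u : R, a * r - r * a = (p : R) * u :=
    (central_iff p a).mp (by rw [hxa]; exact x.2)
  have hb : ∀ r : R, ∃ u : R, b * r - r * b = (p : R) * u :=
    (central_iff p b).mp (by rw [hyb]; exact y.2)
  have h1 : mk a = mk (lft p x) := by rw [hxa]; exact (lft_spec p x).symm
  have h2 : mk b = mk (lft p y) := by rw [hyb]; exact (lft_spec p y).symm
  exact (welldef p hpnzd ha hb h1 h2 hc (cc_spec p x y)).symm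
end

end PoissonAux

/-- There is a unique map `β` on the center of `R/pR` (the reduction modulo
`p` Poisson bracket) satisfying `β(ā,b̄) = c̄` whenever `p·c = [a,b]`, biadditivity,
antisymmetry, the Leibniz rule, and the Jacobi identity. -/
theorem exists_unique_poisson_bracket {R : Type*} [Ring R] (p : ℕ) (hp : p.Prime)
    (hpnzd : ∀ r : R, (p : R) * r = 0 → r = 0) :
    ∃! β : Subring.center (RingQuot (pRel R p)) → Subring.center (RingQuot (pRel R p)) →
        Subring.center (RingQuot (pRel R p)),
      (∀ (a b c : R)
          (ha : RingQuot.mkRingHom (pRel R p) a ∈ Subring.center (RingQuot (pRel R p)))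
          (hb : RingQuot.mkRingHom (pRel R p) b ∈ Subring.center (RingQuot (pRel R p))),
          (p : R) * c = a * b - b * a →
          (β ⟨RingQuot.mkRingHom (pRel R p) a, ha⟩ ⟨RingQuot.mkRingHom (pRel R p) b, hb⟩ :
              RingQuot (pRel R p)) = RingQuot.mkRingHom (pRel R p) c) ∧
      (∀ x y z, β (x + y) z = β x z + β y z) ∧
      (∀ x y z, β x (y + z) = β x y + β x z) ∧
      (∀ x y, β x y = -β y x) ∧
      (∀ x y z, β x (y * z) = β x y * z + y * β x z) ∧
      (∀ x y z, β x (β y z) + β y (β z x) + β z (β x y) = 0) := by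
  classical
  open PoissonAux in
  refine ⟨B p hpnzd, ⟨?_, ?_, ?_, ?_, ?_, ?_⟩, ?_⟩
  · -- property (i)
    intro a b c ha hb hc
    exact B_spec p hpnzd _ _ rfl rfl hc
  · -- left additivity
    intro x y z
    refine Subtype.ext ?_
    have hxa : RingQuot.mkRingHom (pRel R p) (lft p x + lft p y) = (x + y).1 := by
      rw [map_add, lft_spec, lft_spec]; rfl
    have hc : (p : R) * (cc p x z + cc p y z)
        = (lft p x + lft p y) * lft p z - lft p z * (lft p x + lft p y) := by
      rw [mul_add, cc_spec, cc_spec]; noncomm_ring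
    rw [B_spec p hpnzd (x + y) z hxa (lft_spec p z) hc]
    show _ = (B p hpnzd x z).1 + (B p hpnzd y z).1
    rw [map_add]; rfl
  · -- right additivity
    intro x y z
    refine Subtype.ext ?_
    have hya : RingQuot.mkRingHom (pRel R p) (lft p y + lft p z) = (y + z).1 := by
      rw [map_add, lft_spec, lft_spec]; rfl
    have hc : (p : R) * (cc p x y + cc p x z)
        = lft p x * (lft p y + lft p z) - (lft p y + lft p z) * lft p x := by
      rw [mul_add, cc_spec, cc_spec]; noncomm_ring
    rw [B_spec p hpnzd x (y + z) (lft_spec p x) hya hc]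
    show _ = (B p hpnzd x y).1 + (B p hpnzd x z).1
    rw [map_add]; rfl
  · -- antisymmetry
    intro x y
    refine Subtype.ext ?_
    have hc : (p : R) * (-(cc p x y)) = lft p y * lft p x - lft p x * lft p y := by
      rw [mul_neg, cc_spec]; noncomm_ring
    show (B p hpnzd x y).1 = -(B p hpnzd y x).1
    rw [B_spec p hpnzd y x (lft_spec p y) (lft_spec p x) hc, map_neg, neg_neg]
    rfl
  · -- Leibniz
    intro x y z
    refine Subtype.ext ?_
    have hyz : RingQuot.mkRingHom (pRel R p) (lft p y * lft p z) = (y * z).1 := by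
      rw [map_mul, lft_spec, lft_spec]; rfl
    have hc : (p : R) * (cc p x y * lft p z + lft p y * cc p x z)
        = lft p x * (lft p y * lft p z) - (lft p y * lft p z) * lft p x := by
      rw [mul_add, ← mul_assoc, ← hswap p (lft p y) (cc p x z), cc_spec, cc_spec]
      noncomm_ring
    rw [B_spec p hpnzd x (y * z) (lft_spec p x) hyz hc]
    show _ = (B p hpnzd x y).1 * (z : RingQuot (pRel R p))
        + (y : RingQuot (pRel R p)) * (B p hpnzd x z).1
    rw [map_add, map_mul, map_mul, lft_spec, lft_spec]
    rfl
  · -- Jacobi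
    intro x y z
    refine Subtype.ext ?_
    have hcyz : RingQuot.mkRingHom (pRel R p) (lft p x * cc p y z)
        = RingQuot.mkRingHom (pRel R p) (cc p y z * lft p x) := by
      rw [map_mul, map_mul, lft_spec]
      exact (Subring.mem_center_iff.mp x.2 _).symm
    have hczx : RingQuot.mkRingHom (pRel R p) (lft p y * cc p z x)
        = RingQuot.mkRingHom (pRel R p) (cc p z x * lft p y) := by
      rw [map_mul, map_mul, lft_spec]
      exact (Subring.mem_center_iff.mp y.2 _).symm
    have hcxy : RingQuot.mkRingHom (pRel R p) (lft p z * cc p x y)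
        = RingQuot.mkRingHom (pRel R p) (cc p x y * lft p z) := by
      rw [map_mul, map_mul, lft_spec]
      exact (Subring.mem_center_iff.mp z.2 _).symm
    obtain ⟨e1, he1⟩ := exists_c2 p hcyz
    obtain ⟨e2, he2⟩ := exists_c2 p hczx
    obtain ⟨e3, he3⟩ := exists_c2 p hcxy
    have h1 : (B p hpnzd x (B p hpnzd y z)).1 = RingQuot.mkRingHom (pRel R p) e1 :=
      B_spec p hpnzd _ _ (lft_spec p x) rfl he1
    have h2 : (B p hpnzd y (B p hpnzd z x)).1 = RingQuot.mkRingHom (pRel R p) e2 :=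
      B_spec p hpnzd _ _ (lft_spec p y) rfl he2
    have h3 : (B p hpnzd z (B p hpnzd x y)).1 = RingQuot.mkRingHom (pRel R p) e3 :=
      B_spec p hpnzd _ _ (lft_spec p z) rfl he3
    have hsum : e1 + e2 + e3 = 0 := by
      apply hpnzd
      apply hpnzd
      calc (p : R) * ((p : R) * (e1 + e2 + e3))
          = (p : R) * ((p : R) * e1) + (p : R) * ((p : R) * e2)
            + (p : R) * ((p : R) * e3) := by noncomm_ring
        _ = (p : R) * (lft p x * cc p y z - cc p y z * lft p x)
            + (p : R) * (lft p y * cc p z x - cc p z x * lft p y)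
            + (p : R) * (lft p z * cc p x y - cc p x y * lft p z) := by
            rw [he1, he2, he3]
        _ = (lft p x * ((p : R) * cc p y z) - ((p : R) * cc p y z) * lft p x)
            + (lft p y * ((p : R) * cc p z x) - ((p : R) * cc p z x) * lft p y)
            + (lft p z * ((p : R) * cc p x y) - ((p : R) * cc p x y) * lft p z) := by
            rw [hswap p (lft p x) (cc p y z), hswap p (lft p y) (cc p z x),
              hswap p (lft p z) (cc p x y), mul_sub, mul_sub, mul_sub,
              mul_assoc, mul_assoc, mul_assoc]
        _ = (lft p x * (lft p y * lft p z - lft p z * lft p y)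
              - (lft p y * lft p z - lft p z * lft p y) * lft p x)
            + (lft p y * (lft p z * lft p x - lft p x * lft p z)
              - (lft p z * lft p x - lft p x * lft p z) * lft p y)
            + (lft p z * (lft p x * lft p y - lft p y * lft p x)
              - (lft p x * lft p y - lft p y * lft p x) * lft p z) := by
            rw [cc_spec, cc_spec, cc_spec]
        _ = 0 := by noncomm_ring
    show (B p hpnzd x (B p hpnzd y z)).1 + (B p hpnzd y (B p hpnzd z x)).1
        + (B p hpnzd z (B p hpnzd x y)).1 = 0
    rw [h1, h2, h3, ← map_add, ← map_add, hsum, map_zero]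
  · -- uniqueness
    intro β' hβ'
    funext x y
    obtain ⟨a, ha⟩ := mk_surj R p x.1
    obtain ⟨b, hb⟩ := mk_surj R p y.1
    have hac : RingQuot.mkRingHom (pRel R p) a ∈ Subring.center (RingQuot (pRel R p)) := by
      rw [ha]; exact x.2
    have hbc : RingQuot.mkRingHom (pRel R p) b ∈ Subring.center (RingQuot (pRel R p)) := by
      rw [hb]; exact y.2
    obtain ⟨c, hc⟩ := exists_c2 p (a := a) (c := b) (by
      rw [map_mul, map_mul, ha, hb]
      exact Subring.mem_center_iff.mp y.2 x.1)
    have hx : x = ⟨RingQuot.mkRingHom (pRel R p) a, hac⟩ := Subtype.ext ha.symm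
    have hy : y = ⟨RingQuot.mkRingHom (pRel R p) b, hbc⟩ := Subtype.ext hb.symm
    refine Subtype.ext ?_
    rw [hx, hy, hβ'.1 a b c hac hbc hc]
    exact (B_spec p hpnzd _ _ rfl rfl hc).symm
end

section
/- Let S be a finitely generated subring of the complex numbers ℂ and let s ∈ S be nonzero. Then for all sufficiently large primes p there exists a ring homomorphism φ : S → k, where k is the algebraic closure of the field with p elements, such that φ(s) ≠ 0. -/
/-!
The ring `S` is a quotient of a polynomial ring `ℤ[x₁, …, xₙ]` by an ideal generated by finitely
many polynomials `q₁, …, qₘ`, so a ring homomorphism `S → K` not killing `s = g(x)` is a point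
of `Kⁿ` where all `qⱼ` vanish and `g` does not. The existence of such a point is a first-order
sentence in the language of rings, true in `ℂ` (at the generators of `S`); by the Lefschetz
principle it is therefore true in every algebraically closed field of large enough
characteristic.
-/

open FirstOrder Language Field Ring

universe u

namespace FirstOrder.Ring

variable {α : Type*} [Finite α]

noncomputable def existsCommonZeroNeZero (qs : Finset (FreeCommRing α)) (g : FreeCommRing α) :
    Language.ring.Sentence :=
  Formula.iExs α <| Formula.relabel (Sum.inr : α → Empty ⊕ α) <|
    (Formula.iInf fun q : qs => Term.equal (termOfFreeCommRing q.1) (termOfFreeCommRing 0)) ⊓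
      ∼(Term.equal (termOfFreeCommRing g) (termOfFreeCommRing 0))

theorem realize_existsCommonZeroNeZero (qs : Finset (FreeCommRing α)) (g : FreeCommRing α)
    (K : Type*) [CommRing K] [CompatibleRing K] :
    K ⊨ existsCommonZeroNeZero qs g ↔
      ∃ χ : FreeCommRing α →+* K, (∀ q ∈ qs, χ q = 0) ∧ χ g ≠ 0 := by
  rw [FreeCommRing.lift.surjective.exists]
  simp [existsCommonZeroNeZero, Sentence.Realize, Formula.realize_equal]

theorem exists_common_zero_ne_zero_of_charZero (qs : Finset (FreeCommRing α))
    (g : FreeCommRing α) {K₀ : Type*} [Field K₀] [IsAlgClosed K₀] [CharZero K₀]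
    (h : ∃ χ : FreeCommRing α →+* K₀, (∀ q ∈ qs, χ q = 0) ∧ χ g ≠ 0) :
    ∃ N : ℕ, ∀ p : ℕ, N ≤ p → p.Prime → ∀ (K : Type u) [Field K] [IsAlgClosed K] [CharP K p],
      ∃ χ : FreeCommRing α →+* K, (∀ q ∈ qs, χ q = 0) ∧ χ g ≠ 0 := by
  let _ := compatibleRingOfRing K₀
  have hACF₀ : Theory.ACF 0 ⊨ᵇ existsCommonZeroNeZero qs g :=
    ((ACF_isComplete (Or.inr rfl)).realize_sentence_iff _ K₀).1
      ((realize_existsCommonZeroNeZero qs g K₀).2 h)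
  obtain ⟨N, hN⟩ := ((finite_ACF_prime_not_realize_of_ACF_zero_realize _ hACF₀).image
    (fun p : Nat.Primes => (p : ℕ))).bddAbove
  refine ⟨N + 1, fun p hNp hp K _ _ _ => ?_⟩
  have hACFp : Theory.ACF p ⊨ᵇ existsCommonZeroNeZero qs g := by
    by_contra hfalse
    have : p ≤ N := hN ⟨⟨p, hp⟩, hfalse, rfl⟩
    omega
  let _ := compatibleRingOfRing K
  exact (realize_existsCommonZeroNeZero qs g K).1 (hACFp.realize_sentence K)

end FirstOrder.Ring

theorem RingHom.exists_comp_eq_of_ker_eq_span {A R K : Type*} [CommRing A] [CommRing R]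
    [CommRing K] {f : A →+* R} (hf : Function.Surjective f) {qs : Set A}
    (hker : RingHom.ker f = Ideal.span qs) (χ : A →+* K) (hχ : ∀ q ∈ qs, χ q = 0) :
    ∃ φ : R →+* K, φ.comp f = χ := by
  have hle : RingHom.ker f ≤ RingHom.ker χ := by
    rw [hker, Ideal.span_le]
    exact hχ
  exact ⟨_, f.liftOfRightInverse_comp _ (Function.rightInverse_surjInv hf) ⟨χ, hle⟩⟩

theorem Algebra.FiniteType.exists_surjective_freeCommRing (R : Type*) [CommRing R]
    [Algebra.FiniteType ℤ R] :
    ∃ n : ℕ, ∃ f : FreeCommRing (Fin n) →+* R, Function.Surjective f := by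
  obtain ⟨n, f, hf⟩ := Algebra.FiniteType.iff_quotient_mvPolynomial''.1 ‹Algebra.FiniteType ℤ R›
  exact ⟨n, (f : MvPolynomial (Fin n) ℤ →+* R).comp (freeCommRingEquivMvPolynomialInt _).toRingHom,
    hf.comp (freeCommRingEquivMvPolynomialInt _).surjective⟩

theorem Algebra.FiniteType.exists_ringHom_ne_zero_of_charZero {R : Type*} [CommRing R]
    [Algebra.FiniteType ℤ R] {K₀ : Type*} [Field K₀] [IsAlgClosed K₀] [CharZero K₀]
    (ψ : R →+* K₀) {r : R} (hr : ψ r ≠ 0) :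
    ∃ N : ℕ, ∀ p : ℕ, N ≤ p → p.Prime → ∀ (K : Type u) [Field K] [IsAlgClosed K] [CharP K p],
      ∃ φ : R →+* K, φ r ≠ 0 := by
  obtain ⟨n, f, hf⟩ := exists_surjective_freeCommRing R
  have : IsNoetherianRing (FreeCommRing (Fin n)) :=
    isNoetherianRing_of_ringEquiv _ (freeCommRingEquivMvPolynomialInt _).symm
  obtain ⟨qs, hqs⟩ : (RingHom.ker f).FG := IsNoetherian.noetherian _
  obtain ⟨g, rfl⟩ := hf r
  have hψqs : ∀ q ∈ qs, ψ.comp f q = 0 := fun q hq => by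
    have hq' : q ∈ RingHom.ker f := hqs ▸ Ideal.subset_span hq
    rw [RingHom.comp_apply, RingHom.mem_ker.1 hq', map_zero]
  obtain ⟨N, hN⟩ :=
    FirstOrder.Ring.exists_common_zero_ne_zero_of_charZero qs g ⟨ψ.comp f, hψqs, hr⟩
  refine ⟨N, fun p hNp hp K _ _ _ => ?_⟩
  obtain ⟨χ, hχqs, hχg⟩ := hN p hNp hp K
  obtain ⟨φ, rfl⟩ := RingHom.exists_comp_eq_of_ker_eq_span hf hqs.symm χ hχqs
  exact ⟨φ, hχg⟩

/-- If `S ⊆ ℂ` is a finitely generated subring and `0 ≠ s ∈ S`, then for all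
sufficiently large primes `p` there is a ring homomorphism `φ : S → k`, `k` the algebraic
closure of `𝔽_p`, with `φ(s) ≠ 0`. -/
theorem exists_hom_to_char_p_ne_zero (S : Subring ℂ) (hS : S.FG) (s : S) (hs : s ≠ 0) :
    ∃ N : ℕ, ∀ p : ℕ, N ≤ p → p.Prime → ∀ [Fact p.Prime],
      ∃ φ : S →+* AlgebraicClosure (ZMod p), φ s ≠ 0 := by
  -- `S.FG` is `AddSubgroup.FG`: finite generation as an abelian group.
  have : Module.Finite ℤ S :=
    Module.Finite.iff_addGroup_fg.2 ((AddGroup.fg_iff_addSubgroup_fg _).2 hS)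
  obtain ⟨N, hN⟩ := Algebra.FiniteType.exists_ringHom_ne_zero_of_charZero S.subtype
    (r := s) (by simpa using hs)
  exact ⟨N, fun p hNp hp _ => hN p hNp hp (AlgebraicClosure (ZMod p))⟩
end
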